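/- Let s ≥ 1 be an integer and let n = 2s + 1. Then λ₁(D(K₁ ∨ (K_{n−2} ∪ K₁))) ≤ λ₁(D(S_{n,(n−1)/2})), with equality if and only if n = 3. -/

import Mathlib

open Finset

/-- The distance matrix of a graph: the `(i,j)` entry is the graph distance. -/
noncomputable def distMatrix {V : Type*} [Fintype V] (G : SimpleGraph V) : Matrix V V ℝ :=
  fun i j => (G.dist i j : ℝ)

/-- The distance spectral radius: the largest eigenvalue of the distance matrix
(for a connected graph the eigenvalue set is nonempty, and the distance matrix is
real symmetric, so its largest eigenvalue is the supremum of its real eigenvalues). -/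
noncomputable def distSpecRad {V : Type*} [Fintype V] (G : SimpleGraph V) : ℝ := by
  classical
  exact sSup {μ : ℝ | Module.End.HasEigenvalue (Matrix.toLin' (distMatrix G)) μ}

/-- The join `G ∨ H` of two graphs: disjoint union together with all edges in between. -/
def graphJoin {α β : Type*} (G : SimpleGraph α) (H : SimpleGraph β) : SimpleGraph (α ⊕ β) where
  Adj x y :=
    match x, y with
    | Sum.inl a, Sum.inl b => G.Adj a b
    | Sum.inr a, Sum.inr b => H.Adj a b
    | _, _ => True
  symm := by
    constructor
    rintro (a | a) (b | b) h
    · exact G.adj_symm h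
    · trivial
    · trivial
    · exact H.adj_symm h
  loopless := by
    constructor
    rintro (a | a) h
    · exact (G.ne_of_adj h) rfl
    · exact (H.ne_of_adj h) rfl

/-- `S_{n,t} = K_t ∨ (n-t)K₁`. -/
def starLike (n t : ℕ) : SimpleGraph (Fin t ⊕ Fin (n - t)) :=
  graphJoin (⊤ : SimpleGraph (Fin t)) (⊥ : SimpleGraph (Fin (n - t)))

/-- The sum of the values of `f` over the edges incident with `v`. -/
noncomputable def incSum {V : Type*} [Fintype V] (G : SimpleGraph V) (f : Sym2 V → ℕ)
    (v : V) : ℕ := by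
  classical
  exact ∑ e ∈ Finset.univ.filter (fun e : Sym2 V => e ∈ G.incidenceSet v), f e

/-- A `k`-matching of `G`: a function on edges with values in `{0,…,k}` whose sum over
the edges incident with any vertex is at most `k`. -/
def IsKMatching {V : Type*} [Fintype V] (G : SimpleGraph V) (k : ℕ) (f : Sym2 V → ℕ) : Prop :=
  (∀ e, f e ≤ k) ∧ (∀ e, e ∉ G.edgeSet → f e = 0) ∧ (∀ v : V, incSum G f v ≤ k)

/-- A perfect `k`-matching: the sum over the edges incident with any vertex equals `k`. -/
def IsPerfectKMatching {V : Type*} [Fintype V] (G : SimpleGraph V) (k : ℕ)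
    (f : Sym2 V → ℕ) : Prop :=
  IsKMatching G k f ∧ ∀ v : V, incSum G f v = k

/-- `G` has a perfect `k`-matching. -/
def HasPerfectKMatching {V : Type*} [Fintype V] (G : SimpleGraph V) (k : ℕ) : Prop :=
  ∃ f : Sym2 V → ℕ, IsPerfectKMatching G k f

/-- `G` is `k`-`d`-critical. -/
def IsKDCritical {V : Type*} [Fintype V] (G : SimpleGraph V) (k d : ℕ) : Prop :=
  ∀ v : V, ∃ h : Sym2 V → ℕ, IsKMatching G k h ∧ incSum G h v = k - d ∧
    ∀ u : V, u ≠ v → incSum G h u = k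

/-- `i(G - S)`: the number of isolated vertices of `G - S`. -/
noncomputable def numIsolated {V : Type*} [Fintype V] (G : SimpleGraph V) (S : Set V) : ℕ :=
  Nat.card {v : ↥(Sᶜ) | ∀ u, ¬ (G.induce Sᶜ).Adj v u}

/-- `odd(G - S)`: the number of nontrivial odd connected components of `G - S`. -/
noncomputable def numOddNontrivial {V : Type*} [Fintype V] (G : SimpleGraph V) (S : Set V) : ℕ :=
  Nat.card {c : (G.induce Sᶜ).ConnectedComponent //
    Odd (Nat.card c.supp) ∧ 1 < Nat.card c.supp}

/-- `K₁ ∨ (K_{n-2} ∪ K₁)`. -/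
def Gstar (n : ℕ) : SimpleGraph (Fin 1 ⊕ (Fin (n - 2) ⊕ Fin 1)) :=
  graphJoin (⊤ : SimpleGraph (Fin 1))
    ((⊤ : SimpleGraph (Fin (n - 2))) ⊕g (⊥ : SimpleGraph (Fin 1)))

/-- `K₁ ∨ (K_{n-3} ∪ 2K₁)`. -/
def GstarPM (n : ℕ) : SimpleGraph (Fin 1 ⊕ (Fin (n - 3) ⊕ Fin 2)) :=
  graphJoin (⊤ : SimpleGraph (Fin 1))
    ((⊤ : SimpleGraph (Fin (n - 3))) ⊕g (⊥ : SimpleGraph (Fin 2)))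

/-- `K_s ∨ (K_{n-2s} ∪ sK₁)`. -/
def Gsn (n s : ℕ) : SimpleGraph (Fin s ⊕ (Fin (n - 2 * s) ⊕ Fin s)) :=
  graphJoin (⊤ : SimpleGraph (Fin s))
    ((⊤ : SimpleGraph (Fin (n - 2 * s))) ⊕g (⊥ : SimpleGraph (Fin s)))

/-- The "generalized factor-critical" condition for odd `k`:
`odd(G-S) + k·i(G-S) ≤ k|S| - 1` for every nonempty proper subset `S` of `V(G)`. -/
def IsGFCodd {V : Type*} [Fintype V] (G : SimpleGraph V) (k : ℕ) : Prop :=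
  ∀ S : Set V, S.Nonempty → S ≠ Set.univ →
    (numOddNontrivial G S : ℤ) + k * numIsolated G S ≤ k * S.ncard - 1

/-- The "generalized bicritical" condition for odd `k`:
`odd(G-S) + k·i(G-S) ≤ k|S| - 2` for every nonempty proper subset `S` of `V(G)`. -/
def IsGBCodd {V : Type*} [Fintype V] (G : SimpleGraph V) (k : ℕ) : Prop :=
  ∀ S : Set V, S.Nonempty → S ≠ Set.univ →
    (numOddNontrivial G S : ℤ) + k * numIsolated G S ≤ k * S.ncard - 2

/-- The "generalized factor-critical / bicritical" condition for even `k`: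
`i(G-S) ≤ |S| - 1` for every nonempty proper subset `S` of `V(G)`. -/
def IsGFCBCeven {V : Type*} [Fintype V] (G : SimpleGraph V) : Prop :=
  ∀ S : Set V, S.Nonempty → S ≠ Set.univ →
    (numIsolated G S : ℤ) ≤ S.ncard - 1

/-- The Wiener index of a graph on `Fin n`: the sum of distances over pairs `i < j`. -/
noncomputable def wienerFin {n : ℕ} (G : SimpleGraph (Fin n)) : ℕ :=
  ∑ p ∈ Finset.univ.filter (fun p : Fin n × Fin n => p.1 < p.2), G.dist p.1 p.2
/- ===================  Auxiliary development  =================== -/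

namespace DSRAux

open SimpleGraph

/-- `K_a ∨ bK₁`. -/
def JS (a b : ℕ) : SimpleGraph (Fin a ⊕ Fin b) :=
  graphJoin (⊤ : SimpleGraph (Fin a)) (⊥ : SimpleGraph (Fin b))

/-- `K₁ ∨ (K_m ∪ K₁)`. -/
def JG (m : ℕ) : SimpleGraph (Fin 1 ⊕ (Fin m ⊕ Fin 1)) :=
  graphJoin (⊤ : SimpleGraph (Fin 1))
    ((⊤ : SimpleGraph (Fin m)) ⊕g (⊥ : SimpleGraph (Fin 1)))

lemma dist_eq_one' {V : Type*} {G : SimpleGraph V} {u v : V} (h : G.Adj u v) :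
    G.dist u v = 1 := SimpleGraph.dist_eq_one_iff_adj.mpr h

lemma dist_eq_two' {V : Type*} {G : SimpleGraph V} {u v w : V} (hne : u ≠ v)
    (hna : ¬ G.Adj u v) (h1 : G.Adj u w) (h2 : G.Adj w v) : G.dist u v = 2 := by
  have hle : G.dist u v ≤ 2 := by
    have := SimpleGraph.dist_le (SimpleGraph.Walk.cons h1 (SimpleGraph.Walk.cons h2 SimpleGraph.Walk.nil))
    simpa using this
  have h0 : G.dist u v ≠ 0 := by
    rw [Ne, SimpleGraph.dist_eq_zero_iff_eq_or_not_reachable]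
    push_neg
    exact ⟨hne, ⟨SimpleGraph.Walk.cons h1 (SimpleGraph.Walk.cons h2 SimpleGraph.Walk.nil)⟩⟩
  have h1' : G.dist u v ≠ 1 := fun h => hna (SimpleGraph.dist_eq_one_iff_adj.mp h)
  omega

/-! ### Adjacency facts -/

lemma JS_adj_ll {a b : ℕ} {i j : Fin a} : (JS a b).Adj (Sum.inl i) (Sum.inl j) ↔ i ≠ j := by
  show (⊤ : SimpleGraph (Fin a)).Adj i j ↔ i ≠ j
  exact SimpleGraph.top_adj i j

lemma JS_adj_lr {a b : ℕ} (i : Fin a) (j : Fin b) : (JS a b).Adj (Sum.inl i) (Sum.inr j) :=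
  trivial

lemma JS_adj_rl {a b : ℕ} (i : Fin a) (j : Fin b) : (JS a b).Adj (Sum.inr j) (Sum.inl i) :=
  trivial

lemma JS_nadj_rr {a b : ℕ} (i j : Fin b) : ¬ (JS a b).Adj (Sum.inr i) (Sum.inr j) :=
  fun h => h

/-! ### Distance matrices -/

lemma JS_distMatrix (a b : ℕ) (ha : 1 ≤ a) :
    distMatrix (JS a b) = fun v w =>
      match v, w with
      | Sum.inl i, Sum.inl j => if i = j then 0 else 1
      | Sum.inl _, Sum.inr _ => 1
      | Sum.inr _, Sum.inl _ => 1
      | Sum.inr i, Sum.inr j => if i = j then 0 else 2 := by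
  funext v w
  rcases v with i | i <;> rcases w with j | j
  · rcases eq_or_ne i j with h | h
    · subst h; simp [distMatrix, SimpleGraph.dist_self]
    · show ((JS a b).dist (Sum.inl i) (Sum.inl j) : ℝ) = _
      rw [dist_eq_one' (JS_adj_ll.mpr h)]
      simp [h]
  · show ((JS a b).dist (Sum.inl i) (Sum.inr j) : ℝ) = _
    rw [dist_eq_one' (JS_adj_lr i j)]; norm_num
  · show ((JS a b).dist (Sum.inr i) (Sum.inl j) : ℝ) = _
    rw [dist_eq_one' (JS_adj_rl j i)]; norm_num
  · rcases eq_or_ne i j with h | h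
    · subst h; simp [distMatrix, SimpleGraph.dist_self]
    · show ((JS a b).dist (Sum.inr i) (Sum.inr j) : ℝ) = _
      have hne : (Sum.inr i : Fin a ⊕ Fin b) ≠ Sum.inr j := by simp [h]
      rw [dist_eq_two' hne (JS_nadj_rr i j) (JS_adj_rl ⟨0, ha⟩ i) (JS_adj_lr ⟨0, ha⟩ j)]
      simp [h]

end DSRAux

namespace DSRAux

open SimpleGraph

/-! ### JG adjacency -/

lemma JG_adj_lr {m : ℕ} (i : Fin 1) (z : Fin m ⊕ Fin 1) : (JG m).Adj (Sum.inl i) (Sum.inr z) :=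
  trivial

lemma JG_adj_rl {m : ℕ} (i : Fin 1) (z : Fin m ⊕ Fin 1) : (JG m).Adj (Sum.inr z) (Sum.inl i) :=
  trivial

lemma JG_adj_cc {m : ℕ} {i j : Fin m} :
    (JG m).Adj (Sum.inr (Sum.inl i)) (Sum.inr (Sum.inl j)) ↔ i ≠ j := by
  show ((⊤ : SimpleGraph (Fin m)) ⊕g (⊥ : SimpleGraph (Fin 1))).Adj (Sum.inl i) (Sum.inl j) ↔ _
  simp

lemma JG_nadj_cw {m : ℕ} (i : Fin m) (j : Fin 1) :
    ¬ (JG m).Adj (Sum.inr (Sum.inl i)) (Sum.inr (Sum.inr j)) := by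
  show ¬ ((⊤ : SimpleGraph (Fin m)) ⊕g (⊥ : SimpleGraph (Fin 1))).Adj (Sum.inl i) (Sum.inr j)
  simp

lemma JG_nadj_wc {m : ℕ} (i : Fin m) (j : Fin 1) :
    ¬ (JG m).Adj (Sum.inr (Sum.inr j)) (Sum.inr (Sum.inl i)) := by
  show ¬ ((⊤ : SimpleGraph (Fin m)) ⊕g (⊥ : SimpleGraph (Fin 1))).Adj (Sum.inr j) (Sum.inl i)
  simp

lemma JG_distMatrix (m : ℕ) :
    distMatrix (JG m) = fun v w =>
      match v, w with
      | Sum.inl _, Sum.inl _ => 0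
      | Sum.inl _, Sum.inr _ => 1
      | Sum.inr _, Sum.inl _ => 1
      | Sum.inr (Sum.inl i), Sum.inr (Sum.inl j) => if i = j then 0 else 1
      | Sum.inr (Sum.inl _), Sum.inr (Sum.inr _) => 2
      | Sum.inr (Sum.inr _), Sum.inr (Sum.inl _) => 2
      | Sum.inr (Sum.inr _), Sum.inr (Sum.inr _) => 0 := by
  funext v w
  rcases v with i | z <;> rcases w with j | y
  · have : i = j := Subsingleton.elim i j
    subst this; simp [distMatrix, SimpleGraph.dist_self]
  · show ((JG m).dist (Sum.inl i) (Sum.inr y) : ℝ) = _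
    rw [dist_eq_one' (JG_adj_lr i y)]
    rcases y with y | y <;> norm_num
  · show ((JG m).dist (Sum.inr z) (Sum.inl j) : ℝ) = _
    rw [dist_eq_one' (JG_adj_rl j z)]
    rcases z with z | z <;> norm_num
  · rcases z with z | z <;> rcases y with y | y
    · rcases eq_or_ne z y with h | h
      · subst h; simp [distMatrix, SimpleGraph.dist_self]
      · show ((JG m).dist (Sum.inr (Sum.inl z)) (Sum.inr (Sum.inl y)) : ℝ) = _
        rw [dist_eq_one' (JG_adj_cc.mpr h)]
        simp [h]
    · show ((JG m).dist (Sum.inr (Sum.inl z)) (Sum.inr (Sum.inr y)) : ℝ) = _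
      rw [dist_eq_two' (by simp) (JG_nadj_cw z y) (JG_adj_rl 0 (Sum.inl z))
        (JG_adj_lr 0 (Sum.inr y))]
      norm_num
    · show ((JG m).dist (Sum.inr (Sum.inr z)) (Sum.inr (Sum.inl y)) : ℝ) = _
      rw [dist_eq_two' (by simp) (JG_nadj_wc y z) (JG_adj_rl 0 (Sum.inr z))
        (JG_adj_lr 0 (Sum.inl y))]
      norm_num
    · have : z = y := Subsingleton.elim z y
      subst this; simp [distMatrix, SimpleGraph.dist_self]

/-! ### mulVec formulas -/

lemma JS_mulVec (a b : ℕ) (ha : 1 ≤ a) (x : (Fin a ⊕ Fin b) → ℝ) (v : Fin a ⊕ Fin b) :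
    (distMatrix (JS a b)).mulVec x v =
      Sum.elim
        (fun i => ((∑ j : Fin a, x (Sum.inl j)) - x (Sum.inl i)) + ∑ j : Fin b, x (Sum.inr j))
        (fun j => (∑ i : Fin a, x (Sum.inl i)) +
          2 * ((∑ i : Fin b, x (Sum.inr i)) - x (Sum.inr j))) v := by
  rcases v with i | j
  · have hexp : (distMatrix (JS a b)).mulVec x (Sum.inl i) =
        (∑ j : Fin a, (if i = j then (0:ℝ) else 1) * x (Sum.inl j)) +
          ∑ j : Fin b, 1 * x (Sum.inr j) := by
      rw [JS_distMatrix a b ha]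
      simp [Matrix.mulVec, dotProduct, Fintype.sum_sum_type]
    rw [hexp]
    have h1 : ∑ j : Fin a, (if i = j then (0:ℝ) else 1) * x (Sum.inl j)
        = (∑ j : Fin a, x (Sum.inl j)) - x (Sum.inl i) := by
      have step : ∀ j : Fin a, (if i = j then (0:ℝ) else 1) * x (Sum.inl j)
          = x (Sum.inl j) - (if j = i then x (Sum.inl j) else 0) := by
        intro j
        rcases eq_or_ne i j with h | h
        · subst h; simp
        · rw [if_neg h, if_neg (Ne.symm h)]; ring
      rw [Finset.sum_congr rfl (fun j _ => step j), Finset.sum_sub_distrib,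
        Finset.sum_ite_eq' Finset.univ i (fun j => x (Sum.inl j)), if_pos (Finset.mem_univ i)]
    rw [h1]
    simp
  · have hexp : (distMatrix (JS a b)).mulVec x (Sum.inr j) =
        (∑ i : Fin a, 1 * x (Sum.inl i)) +
          ∑ i : Fin b, (if j = i then (0:ℝ) else 2) * x (Sum.inr i) := by
      rw [JS_distMatrix a b ha]
      simp only [Matrix.mulVec, dotProduct, Fintype.sum_sum_type]
    rw [hexp]
    have h1 : ∑ i : Fin b, (if j = i then (0:ℝ) else 2) * x (Sum.inr i)
        = 2 * ((∑ i : Fin b, x (Sum.inr i)) - x (Sum.inr j)) := by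
      have step : ∀ i : Fin b, (if j = i then (0:ℝ) else 2) * x (Sum.inr i)
          = 2 * x (Sum.inr i) - (if i = j then 2 * x (Sum.inr i) else 0) := by
        intro i
        rcases eq_or_ne j i with h | h
        · subst h; simp
        · rw [if_neg h, if_neg (Ne.symm h)]; ring
      rw [Finset.sum_congr rfl (fun i _ => step i), Finset.sum_sub_distrib,
        Finset.sum_ite_eq' Finset.univ j (fun i => 2 * x (Sum.inr i)), if_pos (Finset.mem_univ j),
        ← Finset.mul_sum]
      ring
    rw [h1]
    simp

lemma JG_mulVec (m : ℕ) (x : (Fin 1 ⊕ (Fin m ⊕ Fin 1)) → ℝ) (v : Fin 1 ⊕ (Fin m ⊕ Fin 1)) :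
    (distMatrix (JG m)).mulVec x v =
      Sum.elim
        (fun _ : Fin 1 => (∑ j : Fin m, x (Sum.inr (Sum.inl j))) + x (Sum.inr (Sum.inr 0)))
        (Sum.elim
          (fun i : Fin m => x (Sum.inl 0) +
            ((∑ j : Fin m, x (Sum.inr (Sum.inl j))) - x (Sum.inr (Sum.inl i))) +
            2 * x (Sum.inr (Sum.inr 0)))
          (fun _ : Fin 1 => x (Sum.inl 0) + 2 * ∑ j : Fin m, x (Sum.inr (Sum.inl j)))) v := by
  rcases v with i | z
  · have hexp : (distMatrix (JG m)).mulVec x (Sum.inl i) =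
        (∑ j : Fin 1, (0:ℝ) * x (Sum.inl j)) +
          ((∑ j : Fin m, 1 * x (Sum.inr (Sum.inl j))) +
            ∑ j : Fin 1, 1 * x (Sum.inr (Sum.inr j))) := by
      rw [JG_distMatrix m]
      simp [Matrix.mulVec, dotProduct, Fintype.sum_sum_type]
    rw [hexp]
    simp
  · rcases z with i | i
    · have hexp : (distMatrix (JG m)).mulVec x (Sum.inr (Sum.inl i)) =
          (∑ j : Fin 1, 1 * x (Sum.inl j)) +
            ((∑ j : Fin m, (if i = j then (0:ℝ) else 1) * x (Sum.inr (Sum.inl j))) +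
              ∑ j : Fin 1, 2 * x (Sum.inr (Sum.inr j))) := by
        rw [JG_distMatrix m]
        simp [Matrix.mulVec, dotProduct, Fintype.sum_sum_type]
      rw [hexp]
      have h1 : ∑ j : Fin m, (if i = j then (0:ℝ) else 1) * x (Sum.inr (Sum.inl j))
          = (∑ j : Fin m, x (Sum.inr (Sum.inl j))) - x (Sum.inr (Sum.inl i)) := by
        have step : ∀ j : Fin m, (if i = j then (0:ℝ) else 1) * x (Sum.inr (Sum.inl j))
            = x (Sum.inr (Sum.inl j)) - (if j = i then x (Sum.inr (Sum.inl j)) else 0) := by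
          intro j
          rcases eq_or_ne i j with h | h
          · subst h; simp
          · rw [if_neg h, if_neg (Ne.symm h)]; ring
        rw [Finset.sum_congr rfl (fun j _ => step j), Finset.sum_sub_distrib,
          Finset.sum_ite_eq' Finset.univ i (fun j => x (Sum.inr (Sum.inl j))),
          if_pos (Finset.mem_univ i)]
      rw [h1]
      simp
      ring
    · have hexp : (distMatrix (JG m)).mulVec x (Sum.inr (Sum.inr i)) =
          (∑ j : Fin 1, 1 * x (Sum.inl j)) +
            ((∑ j : Fin m, 2 * x (Sum.inr (Sum.inl j))) +
              ∑ j : Fin 1, (0:ℝ) * x (Sum.inr (Sum.inr j))) := by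
        rw [JG_distMatrix m]
        simp [Matrix.mulVec, dotProduct, Fintype.sum_sum_type]
      rw [hexp]
      simp [← Finset.mul_sum]

end DSRAux

namespace DSRAux

open SimpleGraph

/-! ### The number `μ` and numeric facts -/

noncomputable def mu (s : ℕ) : ℝ :=
  (3 * (s : ℝ) - 1 + Real.sqrt (5 * (s : ℝ) ^ 2 + 6 * s + 1)) / 2

lemma mu_sq (s : ℕ) : (mu s) ^ 2 = (3 * (s : ℝ) - 1) * mu s - (s : ℝ) ^ 2 + 3 * s := by
  have h : Real.sqrt (5 * (s : ℝ) ^ 2 + 6 * s + 1) ^ 2 = 5 * (s : ℝ) ^ 2 + 6 * s + 1 :=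
    Real.sq_sqrt (by positivity)
  unfold mu
  linear_combination (1 / 4 : ℝ) * h

lemma mu_ge (s : ℕ) : 5 * (s : ℝ) / 2 ≤ mu s := by
  have h : (2 * (s : ℝ) + 1) ≤ Real.sqrt (5 * (s : ℝ) ^ 2 + 6 * s + 1) := by
    have h0 : (2 * (s : ℝ) + 1) = Real.sqrt ((2 * (s : ℝ) + 1) ^ 2) :=
      (Real.sqrt_sq (by positivity)).symm
    rw [h0]
    apply Real.sqrt_le_sqrt
    nlinarith [sq_nonneg (s : ℝ), Nat.cast_nonneg (α := ℝ) s]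
  unfold mu
  linarith

lemma mu_ge' (s : ℕ) (hs : 1 ≤ s) : (5 / 2 : ℝ) ≤ mu s := by
  have h1 : (1 : ℝ) ≤ (s : ℝ) := by exact_mod_cast hs
  have := mu_ge s
  linarith

/-- Any root of the quotient quadratic of `S_{2s+1,s}` is at most `μ`. -/
lemma q_root_le (s : ℕ) {t : ℝ}
    (hq : t ^ 2 - (3 * (s : ℝ) - 1) * t + (s : ℝ) ^ 2 - 3 * s = 0) : t ≤ mu s := by
  by_contra hgt
  push_neg at hgt
  have h2 := mu_sq s
  have h5 := mu_ge s
  have key : (t - mu s) * (t + mu s - (3 * (s : ℝ) - 1)) = 0 := by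
    linear_combination hq - h2
  have pos1 : 0 < t - mu s := by linarith
  have pos2 : 0 < t + mu s - (3 * (s : ℝ) - 1) := by
    have : (0 : ℝ) ≤ (s : ℝ) := Nat.cast_nonneg s
    linarith
  nlinarith [mul_pos pos1 pos2]

/-- Any root of the cubic of `K₁ ∨ (K_{2s-1} ∪ K₁)` is at most `μ`, strictly if `2 ≤ s`. -/
lemma p_root_le (s : ℕ) (hs : 1 ≤ s) {t : ℝ}
    (hp : t ^ 3 - (2 * (s : ℝ) - 2) * t ^ 2 - (10 * (s : ℝ) - 4) * t - (6 * (s : ℝ) - 2) = 0) :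
    t ≤ mu s ∧ (2 ≤ s → t < mu s) := by
  set μ := mu s with hμdef
  have hs1 : (1 : ℝ) ≤ (s : ℝ) := by exact_mod_cast hs
  have h2 : μ ^ 2 = (3 * (s : ℝ) - 1) * μ - (s : ℝ) ^ 2 + 3 * s := mu_sq s
  have h5 : 5 * (s : ℝ) / 2 ≤ μ := mu_ge s
  have h52 : (5 / 2 : ℝ) ≤ μ := mu_ge' s hs
  have hpmu : μ ^ 3 - (2 * (s : ℝ) - 2) * μ ^ 2 - (10 * (s : ℝ) - 4) * μ - (6 * (s : ℝ) - 2)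
      = ((s : ℝ) - 1) * ((2 * (s : ℝ) - 3) * μ - ((s : ℝ) ^ 2 - s + 2)) := by
    linear_combination (μ + (s : ℝ) + 1) * h2
  -- the quadratic cofactor is positive for t ≥ μ
  have hQ : ∀ u : ℝ, μ ≤ u →
      0 < u ^ 2 + u * μ + μ ^ 2 - (2 * (s : ℝ) - 2) * (u + μ) - (10 * (s : ℝ) - 4) := by
    intro u hu
    have hA : 0 ≤ (u - μ) * (u + μ - (2 * (s : ℝ) - 2)) := by
      apply mul_nonneg (by linarith)
      nlinarith
    have hB : 0 ≤ (u - μ) * μ := mul_nonneg (by linarith) (by linarith)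
    nlinarith [mul_nonneg (show (0:ℝ) ≤ μ - 5 * (s:ℝ)/2 by linarith) (show (0:ℝ) ≤ μ by linarith),
      mul_nonneg (show (0:ℝ) ≤ (s:ℝ) - 1 by linarith) (show (0:ℝ) ≤ μ by linarith)]
  -- nonnegativity of p(μ)
  have hpmu_nonneg : 0 ≤ ((s : ℝ) - 1) * ((2 * (s : ℝ) - 3) * μ - ((s : ℝ) ^ 2 - s + 2)) := by
    rcases eq_or_lt_of_le hs with h1 | h1
    · rw [← h1]; norm_num
    · have hs2 : (2 : ℝ) ≤ (s : ℝ) := by exact_mod_cast h1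
      have hfac : 0 < (2 * (s : ℝ) - 3) * μ - ((s : ℝ) ^ 2 - s + 2) := by
        nlinarith [mul_nonneg (show (0:ℝ) ≤ 2*(s:ℝ) - 3 by linarith)
          (show (0:ℝ) ≤ μ - 5 * (s:ℝ)/2 by linarith)]
      nlinarith
  constructor
  · by_contra hgt
    push_neg at hgt
    have hq := hQ t hgt.le
    have hid : t ^ 3 - (2 * (s : ℝ) - 2) * t ^ 2 - (10 * (s : ℝ) - 4) * t - (6 * (s : ℝ) - 2)
        = (t - μ) * (t ^ 2 + t * μ + μ ^ 2 - (2 * (s : ℝ) - 2) * (t + μ) - (10 * (s : ℝ) - 4))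
          + (μ ^ 3 - (2 * (s : ℝ) - 2) * μ ^ 2 - (10 * (s : ℝ) - 4) * μ - (6 * (s : ℝ) - 2)) := by
      ring
    nlinarith [mul_pos (show (0:ℝ) < t - μ by linarith) hq]
  · intro hs2
    have hs2' : (2 : ℝ) ≤ (s : ℝ) := by exact_mod_cast hs2
    by_contra hgt
    push_neg at hgt
    have hq := hQ t hgt
    have hfac : 0 < (2 * (s : ℝ) - 3) * μ - ((s : ℝ) ^ 2 - s + 2) := by
      nlinarith [mul_nonneg (show (0:ℝ) ≤ 2*(s:ℝ) - 3 by linarith)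
        (show (0:ℝ) ≤ μ - 5 * (s:ℝ)/2 by linarith)]
    have hpmu_pos : 0 < ((s : ℝ) - 1) * ((2 * (s : ℝ) - 3) * μ - ((s : ℝ) ^ 2 - s + 2)) := by
      apply mul_pos (by linarith) hfac
    nlinarith [mul_nonneg (show (0:ℝ) ≤ t - μ by linarith) hq.le]

end DSRAux

namespace DSRAux

open SimpleGraph

lemma eigen_pointwise {n : Type*} [Fintype n] {M : Matrix n n ℝ} {t : ℝ}
    {x : n → ℝ} (h : x ∈ Module.End.eigenspace (Matrix.mulVecLin M) t) :
    ∀ v, M.mulVec x v = t * x v := by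
  have h' := Module.End.mem_eigenspace_iff.mp h
  rw [Matrix.mulVecLin_apply] at h'
  intro v
  rw [h']
  simp

/-- Eigenvalues of the distance matrix of `K_a ∨ bK₁`. -/
lemma JS_eig (a b : ℕ) (ha : 1 ≤ a) {t : ℝ}
    (ht : Module.End.HasEigenvalue (Matrix.mulVecLin (distMatrix (JS a b))) t) :
    t = -1 ∨ t = -2 ∨
      t ^ 2 - ((a : ℝ) - 1 + (2 * b - 2)) * t + (((a : ℝ) - 1) * (2 * b - 2) - a * b) = 0 := by
  obtain ⟨x, hmem, hx0⟩ := ht.exists_hasEigenvector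
  have hEq := eigen_pointwise hmem
  set SK := ∑ j : Fin a, x (Sum.inl j) with hSKdef
  set SI := ∑ j : Fin b, x (Sum.inr j) with hSIdef
  have hK : ∀ i, t * x (Sum.inl i) = (SK - x (Sum.inl i)) + SI := by
    intro i
    have h := hEq (Sum.inl i)
    rw [JS_mulVec a b ha x (Sum.inl i)] at h
    simpa using h.symm
  have hI : ∀ j, t * x (Sum.inr j) = SK + 2 * (SI - x (Sum.inr j)) := by
    intro j
    have h := hEq (Sum.inr j)
    rw [JS_mulVec a b ha x (Sum.inr j)] at h
    simpa using h.symm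
  by_cases h1 : t = -1
  · exact Or.inl h1
  by_cases h2 : t = -2
  · exact Or.inr (Or.inl h2)
  right; right
  have ht1 : t + 1 ≠ 0 := fun h => h1 (by linarith [sub_eq_zero.mp (by linarith [h] : t - (-1) = 0)])
  have ht2 : t + 2 ≠ 0 := fun h => h2 (by linarith [h] )
  set c := (SK + SI) / (t + 1) with hcdef
  set d := (SK + 2 * SI) / (t + 2) with hddef
  have hxK : ∀ i, x (Sum.inl i) = c := by
    intro i
    have h := hK i
    rw [hcdef, eq_div_iff ht1]
    linarith
  have hxI : ∀ j, x (Sum.inr j) = d := by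
    intro j
    have h := hI j
    rw [hddef, eq_div_iff ht2]
    linarith
  have hSKc : SK = a * c := by
    rw [hSKdef, Finset.sum_congr rfl (fun j _ => hxK j)]
    simp [Finset.sum_const, Finset.card_univ, mul_comm]
  have hSId : SI = b * d := by
    rw [hSIdef, Finset.sum_congr rfl (fun j _ => hxI j)]
    simp [Finset.sum_const, Finset.card_univ, mul_comm]
  have F1 : (t + 1) * c = (a : ℝ) * c + b * d := by
    have h : (t + 1) * c = SK + SI := by
      rw [hcdef, mul_div_cancel₀ _ ht1]
    rw [h, hSKc, hSId]
  have F2 : (t + 2) * d = (a : ℝ) * c + 2 * ((b : ℝ) * d) := by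
    have h : (t + 2) * d = SK + 2 * SI := by
      rw [hddef, mul_div_cancel₀ _ ht2]
    rw [h, hSKc, hSId]
  have hDc : (t ^ 2 - ((a : ℝ) - 1 + (2 * b - 2)) * t + (((a : ℝ) - 1) * (2 * b - 2) - a * b)) * c
      = 0 := by
    linear_combination (t - 2 * (b : ℝ) + 2) * F1 + (b : ℝ) * F2
  have hDd : (t ^ 2 - ((a : ℝ) - 1 + (2 * b - 2)) * t + (((a : ℝ) - 1) * (2 * b - 2) - a * b)) * d
      = 0 := by
    linear_combination (a : ℝ) * F1 + (t - (a : ℝ) + 1) * F2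
  have hcd : c ≠ 0 ∨ d ≠ 0 := by
    by_contra h
    push_neg at h
    apply hx0
    funext v
    rcases v with i | j
    · show x (Sum.inl i) = 0
      rw [hxK i, h.1]
    · show x (Sum.inr j) = 0
      rw [hxI j, h.2]
  rcases hcd with h | h
  · exact (mul_eq_zero.mp hDc).resolve_right h
  · exact (mul_eq_zero.mp hDd).resolve_right h

/-- Eigenvalues of the distance matrix of `K₁ ∨ (K_m ∪ K₁)`. -/
lemma JG_eig (m : ℕ) {t : ℝ}
    (ht : Module.End.HasEigenvalue (Matrix.mulVecLin (distMatrix (JG m))) t) :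
    t = -1 ∨
      t ^ 3 - ((m : ℝ) - 1) * t ^ 2 - (5 * (m : ℝ) + 1) * t - (3 * (m : ℝ) + 1) = 0 := by
  obtain ⟨x, hmem, hx0⟩ := ht.exists_hasEigenvector
  have hEq := eigen_pointwise hmem
  set A := x (Sum.inl 0) with hAdef
  set W := x (Sum.inr (Sum.inr 0)) with hWdef
  set SC := ∑ j : Fin m, x (Sum.inr (Sum.inl j)) with hSCdef
  have hU : t * A = SC + W := by
    have h := hEq (Sum.inl 0)
    rw [JG_mulVec m x (Sum.inl 0)] at h
    simpa using h.symm
  have hC : ∀ i, t * x (Sum.inr (Sum.inl i))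
      = A + (SC - x (Sum.inr (Sum.inl i))) + 2 * W := by
    intro i
    have h := hEq (Sum.inr (Sum.inl i))
    rw [JG_mulVec m x (Sum.inr (Sum.inl i))] at h
    simpa using h.symm
  have hW : t * W = A + 2 * SC := by
    have h := hEq (Sum.inr (Sum.inr 0))
    rw [JG_mulVec m x (Sum.inr (Sum.inr 0))] at h
    simpa using h.symm
  by_cases h1 : t = -1
  · exact Or.inl h1
  right
  have ht1 : t + 1 ≠ 0 := fun h => h1 (by linarith)
  set c := (A + SC + 2 * W) / (t + 1) with hcdef
  have hxC : ∀ i, x (Sum.inr (Sum.inl i)) = c := by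
    intro i
    have h := hC i
    rw [hcdef, eq_div_iff ht1]
    linarith
  have hSCc : SC = m * c := by
    rw [hSCdef, Finset.sum_congr rfl (fun j _ => hxC j)]
    simp [Finset.sum_const, Finset.card_univ, mul_comm]
  have E1 : t * A = (m : ℝ) * c + W := by rw [hU, hSCc]
  have E2 : (t + 1) * c = A + (m : ℝ) * c + 2 * W := by
    have h : (t + 1) * c = A + SC + 2 * W := by
      rw [hcdef, mul_div_cancel₀ _ ht1]
    rw [h, hSCc]
  have E3 : t * W = A + 2 * ((m : ℝ) * c) := by rw [hW, hSCc]
  set P := t ^ 3 - ((m : ℝ) - 1) * t ^ 2 - (5 * (m : ℝ) + 1) * t - (3 * (m : ℝ) + 1) with hPdef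
  have hDA : P * A = 0 := by
    rw [hPdef]
    linear_combination ((t - (m : ℝ) + 1) * t - 4 * m) * E1 + ((m : ℝ) * t + 2 * m) * E2
      + (t + (m : ℝ) + 1) * E3
  have hDc : P * c = 0 := by
    rw [hPdef]
    linear_combination (t + 2) * E1 + (t ^ 2 - 1) * E2 + (2 * t + 1) * E3
  have hDW : P * W = 0 := by
    rw [hPdef]
    linear_combination (t + (m : ℝ) + 1) * E1 + (2 * (m : ℝ) * t + m) * E2
      + (t * (t - (m : ℝ) + 1) - m) * E3
  have hnz : A ≠ 0 ∨ c ≠ 0 ∨ W ≠ 0 := by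
    by_contra h
    push_neg at h
    apply hx0
    funext v
    rcases v with i | z
    · show x (Sum.inl i) = 0
      have : i = 0 := Subsingleton.elim i 0
      rw [this, ← hAdef, h.1]
    · rcases z with i | i
      · show x (Sum.inr (Sum.inl i)) = 0
        rw [hxC i, h.2.1]
      · show x (Sum.inr (Sum.inr i)) = 0
        have : i = 0 := Subsingleton.elim i 0
        rw [this, ← hWdef, h.2.2]
  rcases hnz with h | h | h
  · exact (mul_eq_zero.mp hDA).resolve_right h
  · exact (mul_eq_zero.mp hDc).resolve_right h
  · exact (mul_eq_zero.mp hDW).resolve_right h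

end DSRAux

namespace DSRAux

open SimpleGraph

/-- `μ` is an eigenvalue of the distance matrix of `S_{2s+1,s} = K_s ∨ (s+1)K₁`. -/
lemma JS_mu_hasEig (s : ℕ) (hs : 1 ≤ s) :
    Module.End.HasEigenvalue (Matrix.mulVecLin (distMatrix (JS s (s + 1)))) (mu s) := by
  have hs1 : (1 : ℝ) ≤ (s : ℝ) := by exact_mod_cast hs
  have h2 := mu_sq s
  have h5 := mu_ge s
  set μ := mu s with hμdef
  set x : (Fin s ⊕ Fin (s + 1)) → ℝ :=
    Sum.elim (fun _ => (s : ℝ) + 1) (fun _ => μ + 1 - s) with hxdef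
  apply Module.End.hasEigenvalue_of_hasEigenvector (x := x)
  constructor
  · rw [Module.End.mem_eigenspace_iff, Matrix.mulVecLin_apply]
    funext v
    rw [JS_mulVec s (s + 1) hs x v]
    have hxl : ∀ i : Fin s, x (Sum.inl i) = (s : ℝ) + 1 := fun _ => rfl
    have hxr : ∀ j : Fin (s + 1), x (Sum.inr j) = μ + 1 - (s : ℝ) := fun _ => rfl
    have hSK : ∑ j : Fin s, x (Sum.inl j) = (s : ℝ) * ((s : ℝ) + 1) := by
      rw [Finset.sum_congr rfl (fun j _ => hxl j)]
      simp only [Finset.sum_const, Finset.card_univ, Fintype.card_fin, nsmul_eq_mul]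
    have hSI : ∑ j : Fin (s + 1), x (Sum.inr j) = ((s : ℝ) + 1) * (μ + 1 - (s : ℝ)) := by
      rw [Finset.sum_congr rfl (fun j _ => hxr j)]
      simp only [Finset.sum_const, Finset.card_univ, Fintype.card_fin, nsmul_eq_mul]
      push_cast
      ring
    rcases v with i | j
    · simp only [Sum.elim_inl, Pi.smul_apply, smul_eq_mul]
      rw [hSK, hSI, hxl i]
      ring
    · simp only [Sum.elim_inr, Pi.smul_apply, smul_eq_mul]
      rw [hSK, hSI, hxr j]
      linear_combination -h2
  · intro h
    have h0 := congrFun h (Sum.inr 0)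
    have : μ + 1 - (s : ℝ) = 0 := h0
    linarith

/-- `μ₁ = 1 + √3` is an eigenvalue of the distance matrix of `K₁ ∨ (K₁ ∪ K₁)`. -/
lemma JG1_mu_hasEig :
    Module.End.HasEigenvalue (Matrix.mulVecLin (distMatrix (JG 1))) (mu 1) := by
  have h2 := mu_sq 1
  norm_num at h2
  set μ := mu 1 with hμdef
  set x : (Fin 1 ⊕ (Fin 1 ⊕ Fin 1)) → ℝ :=
    Sum.elim (fun _ => μ - 2) (Sum.elim (fun _ => 1) (fun _ => 1)) with hxdef
  apply Module.End.hasEigenvalue_of_hasEigenvector (x := x)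
  constructor
  · rw [Module.End.mem_eigenspace_iff, Matrix.mulVecLin_apply]
    funext v
    rw [JG_mulVec 1 x v]
    have hx1 : ∀ i : Fin 1, x (Sum.inl i) = μ - 2 := fun _ => rfl
    have hx2 : ∀ i : Fin 1, x (Sum.inr (Sum.inl i)) = 1 := fun _ => rfl
    have hx3 : ∀ i : Fin 1, x (Sum.inr (Sum.inr i)) = 1 := fun _ => rfl
    have hSC : ∑ j : Fin 1, x (Sum.inr (Sum.inl j)) = 1 := by
      rw [Finset.sum_congr rfl (fun j _ => hx2 j)]
      simp
    rcases v with i | z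
    · simp only [Sum.elim_inl, Pi.smul_apply, smul_eq_mul]
      rw [hSC, hx3 0, hx1 i]
      linear_combination -h2
    · rcases z with i | i
      · simp only [Sum.elim_inr, Sum.elim_inl, Pi.smul_apply, smul_eq_mul]
        rw [hSC, hx1 0, hx2 i, hx3 0]
        ring
      · simp only [Sum.elim_inr, Pi.smul_apply, smul_eq_mul]
        rw [hSC, hx1 0, hx3 i]
        ring
  · intro h
    have h0 := congrFun h (Sum.inr (Sum.inl 0))
    have : (1 : ℝ) = 0 := h0
    norm_num at this

/-! ### The distance spectral radii -/

lemma distSpecRad_def {V : Type*} [Fintype V] (G : SimpleGraph V) :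
    distSpecRad G
      = sSup {μ : ℝ | Module.End.HasEigenvalue (Matrix.mulVecLin (distMatrix G)) μ} := by
  unfold distSpecRad
  congr 1

lemma JS_specRad (s : ℕ) (hs : 1 ≤ s) : distSpecRad (JS s (s + 1)) = mu s := by
  rw [distSpecRad_def]
  apply IsGreatest.csSup_eq
  constructor
  · exact JS_mu_hasEig s hs
  · rintro t ht
    have h52 := mu_ge' s hs
    rcases JS_eig s (s + 1) hs ht with h | h | h
    · linarith [h.le]
    · linarith [h.le]
    · apply q_root_le s
      push_cast at h
      linear_combination h

lemma JG_upper (s : ℕ) (hs : 1 ≤ s) {t : ℝ}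
    (ht : Module.End.HasEigenvalue (Matrix.mulVecLin (distMatrix (JG (2 * s - 1)))) t) :
    t ≤ mu s ∧ (2 ≤ s → t < mu s) := by
  have h52 := mu_ge' s hs
  have hcast : ((2 * s - 1 : ℕ) : ℝ) = 2 * (s : ℝ) - 1 := by
    have h1 : 1 ≤ 2 * s := by omega
    push_cast [Nat.cast_sub h1]
    ring
  rcases JG_eig (2 * s - 1) ht with h | h
  · constructor
    · linarith [h.le]
    · intro _; linarith [h.le]
  · rw [hcast] at h
    exact p_root_le s hs (by linear_combination h)

lemma JG_specRad_le (s : ℕ) (hs : 1 ≤ s) : distSpecRad (JG (2 * s - 1)) ≤ mu s := by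
  rw [distSpecRad_def]
  apply Real.sSup_le
  · intro t ht
    exact (JG_upper s hs ht).1
  · linarith [mu_ge' s hs]

lemma JG_specRad_lt (s : ℕ) (hs2 : 2 ≤ s) : distSpecRad (JG (2 * s - 1)) < mu s := by
  have hs : 1 ≤ s := by omega
  have hμpos : (0 : ℝ) < mu s := by linarith [mu_ge' s hs]
  rw [distSpecRad_def]
  set E := {t : ℝ | Module.End.HasEigenvalue (Matrix.mulVecLin (distMatrix (JG (2 * s - 1)))) t}
    with hEdef
  have hfin : E.Finite := Module.End.finite_hasEigenvalue _
  rcases Set.eq_empty_or_nonempty E with hE | hE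
  · rw [hE, Real.sSup_empty]
    exact hμpos
  · have hmem := hE.csSup_mem hfin
    exact (JG_upper s hs hmem).2 hs2

lemma JG_specRad_one : distSpecRad (JG 1) = mu 1 := by
  rw [distSpecRad_def]
  apply IsGreatest.csSup_eq
  constructor
  · exact JG1_mu_hasEig
  · rintro t ht
    exact (JG_upper 1 le_rfl ht).1

/-! ### Transport along equal sizes -/

lemma JS_cast {a a' b b' : ℕ} (ha : a = a') (hb : b = b') :
    distSpecRad (JS a b) = distSpecRad (JS a' b') := by
  subst ha; subst hb; rfl

lemma JG_cast {m m' : ℕ} (hm : m = m') :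
    distSpecRad (JG m) = distSpecRad (JG m') := by
  subst hm; rfl

end DSRAux

theorem statement11 (s n : ℕ) (hs : 1 ≤ s) (hn : n = 2 * s + 1) :
    distSpecRad (Gstar n) ≤ distSpecRad (starLike n ((n - 1) / 2)) ∧
      (distSpecRad (Gstar n) = distSpecRad (starLike n ((n - 1) / 2)) ↔ n = 3) := by
  subst hn
  have eS : distSpecRad (starLike (2 * s + 1) ((2 * s + 1 - 1) / 2))
      = distSpecRad (DSRAux.JS s (s + 1)) := by
    show distSpecRad (DSRAux.JS ((2 * s + 1 - 1) / 2) (2 * s + 1 - (2 * s + 1 - 1) / 2)) = _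
    exact DSRAux.JS_cast (by omega) (by omega)
  have eG : distSpecRad (Gstar (2 * s + 1)) = distSpecRad (DSRAux.JG (2 * s - 1)) := by
    show distSpecRad (DSRAux.JG (2 * s + 1 - 2)) = _
    exact DSRAux.JG_cast (by omega)
  rw [eS, eG, DSRAux.JS_specRad s hs]
  refine ⟨DSRAux.JG_specRad_le s hs, ?_, ?_⟩
  · intro heq
    by_contra h3
    have hs2 : 2 ≤ s := by omega
    exact absurd heq (ne_of_lt (DSRAux.JG_specRad_lt s hs2))
  · intro h3
    have hs1 : s = 1 := by omega
    subst hs1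
    have : distSpecRad (DSRAux.JG (2 * 1 - 1)) = distSpecRad (DSRAux.JG 1) :=
      DSRAux.JG_cast (by norm_num)
    rw [this, DSRAux.JG_specRad_one]
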